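/- Let D be a degree on the ordinal S, and let R be the least set of ordinals less than S containing 0 and closed under the collapsing function, i.e., whenever a, b ∈ R and C(a,b) is defined, C(a,b) ∈ R. Then the order type of R (under the usual ordering of ordinals) is at most ε_0, the least ordinal x with ω^x = x. -/

import Mathlib

open Ordinal Set

noncomputable section

/-- The set of limit points of a set `X` of ordinals: the limit ordinals `c` such that
`X ∩ c` is unbounded in `c`. -/
def limPts (X : Set Ordinal) : Set Ordinal :=
  {c | Order.IsSuccLimit c ∧ ∀ b < c, ∃ x ∈ X, b < x ∧ x < c}

/-- `D` is a degree on the ordinal `S`.  For `c, a < S`, `D c a` reads "`c` has degree `a`". -/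
structure IsDegree (S : Ordinal) (D : Ordinal → Ordinal → Prop) : Prop where
  /-- every `c < S` has degree `0` -/
  deg_zero : ∀ c < S, D c 0
  /-- `0` only has degree `0` -/
  zero_only : ∀ a < S, D 0 a → a = 0
  /-- for a limit `a`, `c` has degree `a` iff it has every degree less than `a` -/
  limit : ∀ a < S, Order.IsSuccLimit a → ∀ c < S, (D c a ↔ ∀ b < a, D c b)
  /-- the successor condition -/
  succ : ∀ a, a + 1 < S →
      {c | c < S ∧ D c (a + 1)} = limPts {c | c < S ∧ D c a} ∩ {c | c < S} ∨
      ∃ d ≤ a, d < S ∧ Order.IsSuccLimit d ∧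
        {c | c < S ∧ D c (a + 1)} =
          (limPts {c | c < S ∧ D c a} ∪ {c | (c < S ∧ D c a) ∧ c ≤ d}) ∩ {c | c < S}

/-- The set of candidate values for the collapsing function `C(a,b)`: ordinals `c < S`
above `b` having some degree `a' ≥ a`. -/
def CSet (S : Ordinal) (D : Ordinal → Ordinal → Prop) (a b : Ordinal) : Set Ordinal :=
  {c | c < S ∧ b < c ∧ ∃ a', a ≤ a' ∧ a' < S ∧ D c a'}

/-- `C(a,b)` is defined iff some candidate value exists. -/
def CDefined (S : Ordinal) (D : Ordinal → Ordinal → Prop) (a b : Ordinal) : Prop :=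
  (CSet S D a b).Nonempty

/-- The collapsing function `C(a,b)`: the least element of `CSet S D a b`
(meaningful when `CDefined S D a b`). -/
def Cval (S : Ordinal) (D : Ordinal → Ordinal → Prop) (a b : Ordinal) : Ordinal :=
  sInf (CSet S D a b)

/-- `a` is maximal in `C(a,b)`: `C(a,b)` is defined and has no degree strictly greater
than `a`. -/
def CMaximal (S : Ordinal) (D : Ordinal → Ordinal → Prop) (a b : Ordinal) : Prop :=
  CDefined S D a b ∧ ∀ a', a < a' → a' < S → ¬ D (Cval S D a b) a'

/-- `b` is minimal in `C(a,b)`: `C(a,b)` is defined and `C(a,b') < C(a,b)` for every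
`b' < b`. -/
def CMinimal (S : Ordinal) (D : Ordinal → Ordinal → Prop) (a b : Ordinal) : Prop :=
  CDefined S D a b ∧ ∀ b' < b, Cval S D a b' < Cval S D a b

end

universe u

/-- The least set of ordinals containing `0` and closed under the collapsing function. -/
inductive RSet (S : Ordinal) (D : Ordinal → Ordinal → Prop) : Ordinal → Prop
  | zero : RSet S D 0
  | collapse (a b : Ordinal) : RSet S D a → RSet S D b → CDefined S D a b →
      RSet S D (Cval S D a b)

noncomputable section

/-- The order type of a set of ordinals, under the usual ordering. -/
def orderTypeOf (s : Set Ordinal.{u}) : Ordinal.{u + 1} :=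
  Ordinal.type (Subrel ((· < ·) : Ordinal.{u} → Ordinal.{u} → Prop) (· ∈ s))

/-- `ε₀`, the least ordinal `x` with `ω ^ x = x`. -/
def eps0 : Ordinal.{u} :=
  sInf {x : Ordinal | omega0 ^ x = x}

end

/-!
Write `rank a` for the order type of `R ∩ [0, a)`. By induction on `x ∈ R`: if no ordinal of
degree `a` lies in `(b, x]`, then `R ∩ (b, x]` has order type `< ω ^ rank a`. Indeed
`x = C(a₁, b₁)` has degree `a₁` but not degree `a`, so `a₁ < a` (degrees are downward closed,
since every class `C_a` is closed below `S`), and minimality of `C(a₁, b₁)` leaves no ordinal of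
degree `a₁` in `(b₁, x)`. So `R ∩ (b, x]` splits into `R ∩ (b, b₁]`, a part of type at most
`ω ^ rank a₁`, and `{x}`, all of them below the additively principal `ω ^ rank a`.
Hence `R ∩ [0, C(a, b)]` has type at most `type (R ∩ [0, b]) + ω ^ rank a + 1`, and by induction
every initial segment of `R` has type below any fixed point `ε = ω ^ ε`, in particular below `ε₀`.
-/

namespace Ordinal

theorem lift_omega0_opow (x : Ordinal.{u}) : lift.{u + 1} (ω ^ x) = ω ^ lift.{u + 1} x := by
  have hlift : Order.IsNormal lift.{u + 1, u} := liftInitialSeg_coe ▸ liftInitialSeg.isNormal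
  refine congrFun (((hlift.comp (isNormal_opow one_lt_omega0)).ext_iff
    ((isNormal_opow one_lt_omega0).comp hlift)).2 ⟨by simp, fun a ha => ?_⟩) x
  simp only [Function.comp_apply, Order.succ_eq_add_one, opow_add_one, lift_mul, lift_add,
    lift_one, lift_omega0] at ha ⊢
  rw [ha]

end Ordinal

theorem eps0_eq_epsilon_zero : eps0.{u} = ε₀ :=
  le_antisymm (csInf_le' (omega0_opow_epsilon 0))
    (le_csInf ⟨_, omega0_opow_epsilon 0⟩ fun _ hx => epsilon_zero_le_of_omega0_opow_le hx.le)

theorem omega0_opow_lift_eps0 : ω ^ lift.{u + 1} eps0.{u} = lift.{u + 1} eps0.{u} := by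
  rw [← lift_omega0_opow, eps0_eq_epsilon_zero, omega0_opow_epsilon]

section orderTypeOf

variable {X Y Z : Set Ordinal.{u}} {β : Ordinal.{u + 1}}

theorem orderTypeOf_mono (h : X ⊆ Y) : orderTypeOf X ≤ orderTypeOf Y :=
  type_le_iff'.2 ⟨⟨⟨inclusion h, inclusion_injective h⟩, Iff.rfl⟩⟩

theorem orderTypeOf_empty : orderTypeOf (∅ : Set Ordinal.{u}) = 0 :=
  @type_eq_zero_of_empty _ _ _ ⟨fun x => x.2⟩

theorem orderTypeOf_singleton (a : Ordinal.{u}) : orderTypeOf {a} = 1 :=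
  @type_eq_one_of_unique _ _ _ ⟨⟨a, rfl⟩⟩ ⟨fun x y => Subtype.ext (x.2.trans y.2.symm)⟩

theorem orderTypeOf_union (h : ∀ y ∈ X, ∀ z ∈ Y, y < z) :
    orderTypeOf (X ∪ Y) = orderTypeOf X + orderTypeOf Y := by
  classical
  have hdisj : Disjoint X Y := disjoint_left.2 fun x hX hY => (h x hX x hY).false
  rw [orderTypeOf, orderTypeOf, orderTypeOf, ← type_sum_lex]
  refine (RelIso.ordinalType_congr ⟨(Equiv.Set.union hdisj).symm, ?_⟩).symm
  rintro (⟨x, hx⟩ | ⟨y, hy⟩) (⟨x', hx'⟩ | ⟨y', hy'⟩)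
  · simp [Equiv.Set.union_symm_apply_left]
  · simp [Equiv.Set.union_symm_apply_left, Equiv.Set.union_symm_apply_right, h _ hx _ hy']
  · simp [Equiv.Set.union_symm_apply_left, Equiv.Set.union_symm_apply_right, (h _ hx' _ hy).not_gt]
  · simp [Equiv.Set.union_symm_apply_right]

theorem orderTypeOf_le_add (hX : X ⊆ Y ∪ Z) (h : ∀ y ∈ Y, ∀ z ∈ Z, y < z) :
    orderTypeOf X ≤ orderTypeOf Y + orderTypeOf Z :=
  (orderTypeOf_mono hX).trans_eq (orderTypeOf_union h)

theorem typein_eq_orderTypeOf_inter_Iio {x : Ordinal.{u}} (hx : x ∈ X) :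
    typein (Subrel (· < ·) (· ∈ X)) ⟨x, hx⟩ = orderTypeOf (X ∩ Iio x) :=
  RelIso.ordinalType_congr
    ⟨⟨fun z => ⟨z.1.1, z.1.2, z.2⟩, fun z => ⟨⟨z.1, z.2.1⟩, z.2.2⟩, fun _ => rfl, fun _ => rfl⟩,
      Iff.rfl⟩

theorem orderTypeOf_le_iff : orderTypeOf X ≤ β ↔ ∀ x ∈ X, orderTypeOf (X ∩ Iio x) < β := by
  refine ⟨fun h x hx => ?_, fun h => le_of_forall_lt fun γ hγ => ?_⟩
  · rw [← typein_eq_orderTypeOf_inter_Iio hx]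
    exact (typein_lt_type _ _).trans_le h
  · obtain ⟨⟨x, hx⟩, rfl⟩ := typein_surj _ hγ
    rw [typein_eq_orderTypeOf_inter_Iio hx]
    exact h x hx

theorem orderTypeOf_inter_Iio_lt_of_lt {x y : Ordinal.{u}} (hy : y ∈ X) (hyx : y < x) :
    orderTypeOf (X ∩ Iio y) < orderTypeOf (X ∩ Iio x) := by
  have := orderTypeOf_le_iff.1 (le_refl (orderTypeOf (X ∩ Iio x))) y ⟨hy, hyx⟩
  rwa [inter_assoc, Iio_inter_Iio, min_eq_right hyx.le] at this

theorem orderTypeOf_inter_Iio_le_inter_Iic (X : Set Ordinal.{u}) (x : Ordinal.{u}) :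
    orderTypeOf (X ∩ Iio x) ≤ orderTypeOf (X ∩ Iic x) :=
  orderTypeOf_mono (inter_subset_inter_right _ Iio_subset_Iic_self)

theorem orderTypeOf_inter_Ioc_le_add (X : Set Ordinal.{u}) (b m x : Ordinal.{u}) :
    orderTypeOf (X ∩ Ioc b x) ≤ orderTypeOf (X ∩ Ioc b m) + orderTypeOf (X ∩ Ioc m x) := by
  refine orderTypeOf_le_add (fun z ⟨hz, hbz, hzx⟩ => ?_) fun y hy z hz => hy.2.2.trans_lt hz.2.1
  rcases le_or_gt z m with hzm | hmz
  exacts [Or.inl ⟨hz, hbz, hzm⟩, Or.inr ⟨hz, hmz, hzx⟩]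

theorem orderTypeOf_inter_Iic_le_add (X : Set Ordinal.{u}) (b x : Ordinal.{u}) :
    orderTypeOf (X ∩ Iic x) ≤ orderTypeOf (X ∩ Iic b) + orderTypeOf (X ∩ Ioc b x) := by
  refine orderTypeOf_le_add (fun z ⟨hz, hzx⟩ => ?_) fun y hy z hz => hy.2.trans_lt hz.2.1
  rcases le_or_gt z b with hzb | hbz
  exacts [Or.inl ⟨hz, hzb⟩, Or.inr ⟨hz, hbz, hzx⟩]

theorem orderTypeOf_inter_Ioc_le_add_one (X : Set Ordinal.{u}) (b x : Ordinal.{u}) :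
    orderTypeOf (X ∩ Ioc b x) ≤ orderTypeOf (X ∩ Ioo b x) + 1 := by
  rw [← orderTypeOf_singleton x]
  refine orderTypeOf_le_add (fun z ⟨hz, hbz, hzx⟩ => ?_) fun y hy z hz => hz ▸ hy.2.2
  rcases hzx.lt_or_eq with hzx | rfl
  exacts [Or.inl ⟨hz, hbz, hzx⟩, Or.inr rfl]

theorem orderTypeOf_inter_Ioo_le {b x : Ordinal.{u}}
    (h : ∀ y ∈ X ∩ Ioo b x, orderTypeOf (X ∩ Ioc b y) < β) : orderTypeOf (X ∩ Ioo b x) ≤ β :=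
  orderTypeOf_le_iff.2 fun y hy =>
    (orderTypeOf_mono fun _ hz => ⟨hz.1.1, hz.1.2.1, le_of_lt hz.2⟩ :
      orderTypeOf (X ∩ Ioo b x ∩ Iio y) ≤ orderTypeOf (X ∩ Ioc b y)).trans_lt (h y hy)

end orderTypeOf

theorem limPts_mono {X Y : Set Ordinal} (h : X ⊆ Y) : limPts X ⊆ limPts Y :=
  fun _ ⟨hc, hX⟩ => ⟨hc, fun b hb =>
    let ⟨x, hx, hbx, hxc⟩ := hX b hb
    ⟨x, h hx, hbx, hxc⟩⟩

/-- The class `C_a` of the degree axioms. -/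
def degreeClass (S : Ordinal) (D : Ordinal → Ordinal → Prop) (a : Ordinal) : Set Ordinal :=
  {c | c < S ∧ D c a}

namespace IsDegree

variable {S : Ordinal.{u}} {D : Ordinal.{u} → Ordinal.{u} → Prop} {a b : Ordinal.{u}}

theorem limPts_inter_subset_succ (hD : IsDegree S D) (ha : a + 1 < S) :
    limPts (degreeClass S D a) ∩ Iio S ⊆ degreeClass S D (a + 1) := by
  rintro c ⟨hc, hcS⟩
  change c ∈ {c | c < S ∧ D c (a + 1)}
  rcases hD.succ a ha with h | ⟨d, -, -, -, h⟩ <;> rw [h]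
  exacts [⟨hc, hcS⟩, ⟨Or.inl hc, hcS⟩]

theorem succ_subset (hD : IsDegree S D) (ha : a + 1 < S) :
    degreeClass S D (a + 1) ⊆ limPts (degreeClass S D a) ∪ degreeClass S D a := by
  intro c hc
  change c ∈ {c | c < S ∧ D c (a + 1)} at hc
  rcases hD.succ a ha with h | ⟨d, -, -, -, h⟩ <;> rw [h] at hc
  exacts [Or.inl hc.1, hc.1.imp id And.left]

theorem subset_of_isSuccLimit (hD : IsDegree S D) (ha : a < S) (hlim : Order.IsSuccLimit a)
    (hb : b < a) :
    degreeClass S D a ⊆ degreeClass S D b :=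
  fun c ⟨hcS, hc⟩ => ⟨hcS, (hD.limit a ha hlim c hcS).1 hc b hb⟩

theorem succ_subset_of_closed (hD : IsDegree S D) (ha : a + 1 < S)
    (hclosed : limPts (degreeClass S D a) ∩ Iio S ⊆ degreeClass S D a) :
    degreeClass S D (a + 1) ⊆ degreeClass S D a := fun _ hc =>
  (hD.succ_subset ha hc).elim (fun hlim => hclosed ⟨hlim, hc.1⟩) id

theorem limPts_degreeClass_subset (hD : IsDegree S D) (ha : a < S) :
    limPts (degreeClass S D a) ∩ Iio S ⊆ degreeClass S D a := by
  induction a using Ordinal.limitRecOn with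
  | zero => exact fun c ⟨_, hcS⟩ => ⟨hcS, hD.deg_zero c hcS⟩
  | add_one a IH =>
    have hclosed := IH ((lt_add_one a).trans ha)
    exact fun c ⟨hc, hcS⟩ => hD.limPts_inter_subset_succ ha
      ⟨limPts_mono (hD.succ_subset_of_closed ha hclosed) hc, hcS⟩
  | limit a hlim IH =>
    refine fun c ⟨hc, hcS⟩ => ⟨hcS, (hD.limit a ha hlim c hcS).2 fun b hb => ?_⟩
    exact (IH b hb (hb.trans ha) ⟨limPts_mono (hD.subset_of_isSuccLimit ha hlim hb) hc, hcS⟩).2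

theorem degreeClass_antitone (hD : IsDegree S D) (hab : b ≤ a) (ha : a < S) :
    degreeClass S D a ⊆ degreeClass S D b := by
  induction a using Ordinal.limitRecOn with
  | zero => rw [nonpos_iff_eq_zero.1 hab]
  | add_one a IH =>
    rcases hab.lt_or_eq with hab | rfl
    · have haS := (lt_add_one a).trans ha
      exact (hD.succ_subset_of_closed ha (hD.limPts_degreeClass_subset haS)).trans
        (IH (Order.lt_add_one_iff.1 hab) haS)
    · exact subset_rfl
  | limit a hlim IH =>
    rcases hab.lt_or_eq with hab | rfl
    exacts [hD.subset_of_isSuccLimit ha hlim hab, subset_rfl]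

end IsDegree

section Collapse

variable {S : Ordinal.{u}} {D : Ordinal.{u} → Ordinal.{u} → Prop} {a b : Ordinal.{u}}

theorem CDefined.left_lt (h : CDefined S D a b) : a < S :=
  let ⟨_, _, _, _, haa', ha'S, _⟩ := h
  haa'.trans_lt ha'S

theorem CDefined.lt_Cval (h : CDefined S D a b) : b < Cval S D a b :=
  (csInf_mem h).2.1

theorem CDefined.Cval_mem_degreeClass (hD : IsDegree S D) (h : CDefined S D a b) :
    Cval S D a b ∈ degreeClass S D a :=
  let ⟨hcS, _, _, haa', ha'S, hc⟩ := csInf_mem h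
  hD.degreeClass_antitone haa' ha'S ⟨hcS, hc⟩

theorem CDefined.disjoint_degreeClass_Ioo_Cval (h : CDefined S D a b) :
    Disjoint (degreeClass S D a) (Ioo b (Cval S D a b)) :=
  disjoint_left.2 fun _ ⟨hcS, hc⟩ ⟨hbc, hcC⟩ =>
    (csInf_le' ⟨hcS, hbc, a, le_rfl, h.left_lt, hc⟩ : Cval S D a b ≤ _).not_gt hcC

theorem CDefined.lt_of_Cval_notMem (hD : IsDegree S D) {a₁ : Ordinal.{u}}
    (h : CDefined S D a₁ b) (hnot : Cval S D a₁ b ∉ degreeClass S D a) : a₁ < a :=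
  lt_of_not_ge fun ha => hnot (hD.degreeClass_antitone ha h.left_lt (h.Cval_mem_degreeClass hD))

end Collapse

section RSet

variable {S : Ordinal.{u}} {D : Ordinal.{u} → Ordinal.{u} → Prop}

local notation "ℛ" => Set.ofPred (RSet S D)

theorem orderTypeOf_RSet_Ioc_lt (hD : IsDegree S D) {x : Ordinal.{u}} (hx : RSet S D x)
    {a b : Ordinal.{u}} (hgap : Disjoint (degreeClass S D a) (Ioc b x)) :
    orderTypeOf (ℛ ∩ Ioc b x) < ω ^ orderTypeOf (ℛ ∩ Iio a) := by
  induction x using WellFoundedLT.induction generalizing a b with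
  | _ x IH =>
  rcases le_or_gt x b with hxb | hbx
  · rw [Ioc_eq_empty hxb.not_gt, inter_empty, orderTypeOf_empty]
    exact opow_pos _ omega0_pos
  cases hx with
  | zero => exact absurd hbx not_lt_zero
  | collapse a₁ b₁ ha₁ hb₁ hdef =>
    have hb₁x := hdef.lt_Cval
    have hrank : orderTypeOf (ℛ ∩ Iio a₁) < orderTypeOf (ℛ ∩ Iio a) :=
      orderTypeOf_inter_Iio_lt_of_lt ha₁
        (hdef.lt_of_Cval_notMem hD (hgap.notMem_of_mem_right ⟨hbx, le_rfl⟩))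
    have hlow : orderTypeOf (ℛ ∩ Ioc b b₁) < ω ^ orderTypeOf (ℛ ∩ Iio a) :=
      IH b₁ hb₁x hb₁ (hgap.mono_right (Ioc_subset_Ioc_right hb₁x.le))
    have hhigh : orderTypeOf (ℛ ∩ Ioo b₁ (Cval S D a₁ b₁)) < ω ^ orderTypeOf (ℛ ∩ Iio a) :=
      (orderTypeOf_inter_Ioo_le fun y ⟨hy, hyx⟩ => IH y hyx.2 hy
        (hdef.disjoint_degreeClass_Ioo_Cval.mono_right (Ioc_subset_Ioo_right hyx.2))).trans_lt
        ((opow_lt_opow_iff_right one_lt_omega0).2 hrank)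
    have hone : 1 < ω ^ orderTypeOf (ℛ ∩ Iio a) :=
      one_lt_opow.2 ⟨one_lt_omega0, (pos_of_gt hrank).ne'⟩
    calc orderTypeOf (ℛ ∩ Ioc b (Cval S D a₁ b₁))
        ≤ orderTypeOf (ℛ ∩ Ioc b b₁) + (orderTypeOf (ℛ ∩ Ioo b₁ (Cval S D a₁ b₁)) + 1) :=
          (orderTypeOf_inter_Ioc_le_add _ _ b₁ _).trans
            (add_le_add_right (orderTypeOf_inter_Ioc_le_add_one _ _ _) _)
      _ < ω ^ orderTypeOf (ℛ ∩ Iio a) :=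
          isPrincipal_add_omega0_opow _ hlow (isPrincipal_add_omega0_opow _ hhigh hone)

theorem orderTypeOf_RSet_Iic_lt (hD : IsDegree S D) {E : Ordinal.{u + 1}} (hE : ω ^ E = E)
    {x : Ordinal.{u}} (hx : RSet S D x) : orderTypeOf (ℛ ∩ Iic x) < E := by
  have hprincipal : IsPrincipal (· + ·) E := hE ▸ isPrincipal_add_omega0_opow E
  have hone : 1 < E := by
    rw [← hE, one_lt_opow]
    exact ⟨one_lt_omega0, fun h0 => by simp [h0] at hE⟩
  induction hx with
  | zero =>
    refine lt_of_le_of_lt ?_ hone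
    rw [← orderTypeOf_singleton 0]
    exact orderTypeOf_mono fun z hz => nonpos_iff_eq_zero.1 hz.2
  | collapse a b _ _ hdef iha ihb =>
    have hmid : orderTypeOf (ℛ ∩ Ioo b (Cval S D a b)) < E := by
      refine (orderTypeOf_inter_Ioo_le fun y ⟨hy, hyx⟩ => orderTypeOf_RSet_Ioc_lt hD hy
        (hdef.disjoint_degreeClass_Ioo_Cval.mono_right (Ioc_subset_Ioo_right hyx.2))).trans_lt ?_
      rw [← hE]
      exact (opow_lt_opow_iff_right one_lt_omega0).2
        ((orderTypeOf_inter_Iio_le_inter_Iic _ a).trans_lt iha)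
    calc orderTypeOf (ℛ ∩ Iic (Cval S D a b))
        ≤ orderTypeOf (ℛ ∩ Iic b) + (orderTypeOf (ℛ ∩ Ioo b (Cval S D a b)) + 1) :=
          (orderTypeOf_inter_Iic_le_add _ b _).trans
            (add_le_add_right (orderTypeOf_inter_Ioc_le_add_one _ _ _) _)
      _ < E := hprincipal ihb (hprincipal hmid hone)

end RSet

theorem orderType_RSet_le_eps0 (S : Ordinal.{u}) (D : Ordinal.{u} → Ordinal.{u} → Prop)
    (hD : IsDegree S D) :
    orderTypeOf {x | RSet S D x} ≤ Ordinal.lift.{u + 1} eps0.{u} :=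
  orderTypeOf_le_iff.2 fun _ hx =>
    (orderTypeOf_inter_Iio_le_inter_Iic _ _).trans_lt
      (orderTypeOf_RSet_Iic_lt hD omega0_opow_lift_eps0 hx)
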